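/- Let G be a finite group, 𝓕 a family of subgroups closed under conjugation and taking subgroups, R a commutative ring with 1, and N a normal subgroup of G with N ∈ 𝓕. Let X be a finite G/N-set all of whose isotropy groups lie in 𝓕_{G/N}. Then Inf^G_{G/N} R[X] ≅ R[Inf^G_{G/N} X] as RΓ_G-modules, where Inf^G_{G/N} X denotes X regarded as a G-set via the quotient map G → G/N. -/

import Mathlib

open CategoryTheory CategoryTheory.Limits Opposite

/-! Core: orbit category over a family of subgroups, modules over it,
chain complexes, dimension functions, homology spheres. -/

/-- The conjugate subgroup `g K g⁻¹`. -/
def conjSub {G : Type} [Group G] (g : G) (K : Subgroup G) : Subgroup G :=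
  K.map (MulAut.conj g).toMonoidHom

/-- A family of subgroups of `G`, closed under conjugation and under taking subgroups. -/
structure SubgroupFamily (G : Type) [Group G] : Type where
  mem : Subgroup G → Prop
  conj_mem : ∀ (g : G) (K : Subgroup G), mem K → mem (conjSub g K)
  le_mem : ∀ (H K : Subgroup G), H ≤ K → mem K → mem H

/-- `(H) ≤ (K)` : some conjugate of `H` is contained in `K`, i.e. `g⁻¹ H g ≤ K` for some `g`. -/
def ConjLE {G : Type} [Group G] (H K : Subgroup G) : Prop := ∃ g : G, H ≤ conjSub g K

/-- A conjugation-invariant (super class) function. -/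
def ConjInv {G : Type} [Group G] (n : Subgroup G → ℤ) : Prop :=
  ∀ (g : G) (K : Subgroup G), n (conjSub g K) = n K

/-- Monotone super class function: `n(H) ≥ n(K)` whenever `(H) ≤ (K)`. -/
def MonotoneConj {G : Type} [Group G] (n : Subgroup G → ℤ) : Prop :=
  ∀ H K : Subgroup G, ConjLE H K → n K ≤ n H

/-- Objects of the orbit category `Or_𝓕 G`: orbits `G/K` with `K ∈ 𝓕`. -/
def OrbitObj {G : Type} [Group G] (F : SubgroupFamily G) : Type := {K : Subgroup G // F.mem K}

/-- The orbit category: morphisms `G/K → G/L` are the `G`-equivariant maps. -/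
instance {G : Type} [Group G] (F : SubgroupFamily G) : Category (OrbitObj F) where
  Hom K L := (G ⧸ K.1) →[G] (G ⧸ L.1)
  id K := MulActionHom.id G
  comp f g := g.comp f

/-- The category of `RΓ_G`-modules: contravariant functors from the orbit
category to `R`-modules. -/
abbrev OrbitMod (R : Type) [CommRing R] {G : Type} [Group G] (F : SubgroupFamily G) :=
  (OrbitObj F)ᵒᵖ ⥤ ModuleCat.{0} R

variable {G : Type} [Group G] {R : Type} [CommRing R] {F : SubgroupFamily G}

/-- The free `RΓ_G`-module `R[G/H^?]`, with value the free `R`-module on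
`Map_G(G/K, G/H)` at the object `G/K`. -/
noncomputable def freeAt (R : Type) [CommRing R] {G : Type} [Group G] {F : SubgroupFamily G}
    (H : OrbitObj F) : OrbitMod R F where
  obj K := ModuleCat.of R ((K.unop ⟶ H) →₀ R)
  map f := ModuleCat.ofHom (Finsupp.lmapDomain R R (fun u => f.unop ≫ u))
  map_id K := by
    apply ModuleCat.hom_ext
    simp only [ModuleCat.hom_ofHom, ModuleCat.hom_id, unop_id, Category.id_comp]
    exact Finsupp.lmapDomain_id R R
  map_comp f g := by
    apply ModuleCat.hom_ext
    simp only [ModuleCat.hom_comp, ModuleCat.hom_ofHom, unop_comp, Category.assoc]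
    exact Finsupp.lmapDomain_comp R R _ _

/-- A free `RΓ_G`-module: a direct sum of modules `R[G/H^?]`, `H ∈ 𝓕`. -/
def IsFreeMod (M : OrbitMod R F) : Prop :=
  ∃ (ι : Type) (b : ι → OrbitObj F), Nonempty (M ≅ ∐ (fun i => freeAt R (b i)))

/-- A finitely generated `RΓ_G`-module: admits an epimorphism from a
finitely generated free module. -/
def IsFGMod (M : OrbitMod R F) : Prop :=
  ∃ (ι : Type) (_ : Fintype ι) (b : ι → OrbitObj F)
    (π : (∐ (fun i => freeAt R (b i))) ⟶ M), Epi π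

/-- A projective `RΓ_G`-module: a direct summand of a free module. -/
def IsProjMod (M : OrbitMod R F) : Prop :=
  ∃ (Fr : OrbitMod R F), IsFreeMod Fr ∧ ∃ (s : M ⟶ Fr) (r : Fr ⟶ M), s ≫ r = 𝟙 M

/-- Chain complexes of `RΓ_G`-modules (non-negatively graded). -/
abbrev OrbitComplex (R : Type) [CommRing R] {G : Type} [Group G] (F : SubgroupFamily G) :=
  ChainComplex (OrbitMod R F) ℕ

/-- The chain complex `C` vanishes at the object `G/K` in degree `i`. -/
def IsZeroAt (C : OrbitComplex R F) (K : OrbitObj F) (i : ℕ) : Prop :=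
  Subsingleton ((C.X i).obj (op K))

/-- The chain complex `C` is finite-dimensional: `C_i = 0` for all large `i`. -/
def IsFiniteDimC (C : OrbitComplex R F) : Prop :=
  ∃ n : ℕ, ∀ i : ℕ, n < i → ∀ K : OrbitObj F, IsZeroAt C K i

/-- The chain complex `C` is finite: finite-dimensional with finitely
generated chain modules. -/
def IsFiniteC (C : OrbitComplex R F) : Prop :=
  IsFiniteDimC C ∧ ∀ i : ℕ, IsFGMod (C.X i)

/-- `dim C(K)`: the largest `d` with `C_d(K) ≠ 0` (or `-1` for the zero complex). -/
noncomputable def dimAt (C : OrbitComplex R F) (K : OrbitObj F) : ℤ :=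
  sSup (insert (-1 : ℤ) {d : ℤ | ∃ i : ℕ, (i : ℤ) = d ∧ ¬ IsZeroAt C K i})

/-- The dimension function `Dim C : S(G) → ℤ`, with value `-1` outside `𝓕`. -/
noncomputable def DimFun (C : OrbitComplex R F) : Subgroup G → ℤ := fun H =>
  open scoped Classical in
  if h : F.mem H then dimAt C ⟨H, h⟩ else -1

/-- The augmented complex `⋯ → C₁ → C₀ → M → 0` (with `M` placed in degree `0`,
i.e. the whole complex shifted up by one). -/
noncomputable def augment {V : Type 1} [Category.{0} V] [Abelian V]
    (C : ChainComplex V ℕ) (M : V) (π : C.X 0 ⟶ M) (h : C.d 1 0 ≫ π = 0) :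
    ChainComplex V ℕ :=
  ChainComplex.of
    (fun j => match j with
      | 0 => M
      | (i+1) => C.X i)
    (fun j => match j with
      | 0 => π
      | (i+1) => C.d (i+1) i)
    (fun j => match j with
      | 0 => h
      | (i+1) => C.d_comp_d (i+2) (i+1) i)

/-- The constant coefficient system `R̲`. -/
noncomputable def constR (R : Type) [CommRing R] {G : Type} [Group G] (F : SubgroupFamily G) :
    OrbitMod R F :=
  (Functor.const (OrbitObj F)ᵒᵖ).obj (ModuleCat.of R R)

/-- Evaluation of a chain complex over `RΓ_G` at the object `G/K`. -/
noncomputable def evalC (C : OrbitComplex R F) (K : OrbitObj F) :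
    ChainComplex (ModuleCat.{0} R) ℕ where
  X i := (C.X i).obj (op K)
  d i j := (C.d i j).app (op K)
  shape i j hij := by rw [C.shape i j hij]; rfl
  d_comp_d' i j k _ _ := by
    rw [← NatTrans.comp_app, C.d_comp_d]; rfl

/-- The augmented complex of `C(K)` (with `R` in degree `-1`, shifted up by one). -/
noncomputable def augC (C : OrbitComplex R F) (ε : C.X 0 ⟶ constR R F)
    (h : C.d 1 0 ≫ ε = 0) (K : OrbitObj F) : ChainComplex (ModuleCat.{0} R) ℕ :=
  augment (evalC C K) (ModuleCat.of R R) (ε.app (op K))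
    (by show (C.d 1 0).app (op K) ≫ ε.app (op K) = 0
        rw [show (C.d 1 0).app (op K) ≫ ε.app (op K) = (C.d 1 0 ≫ ε).app (op K) from rfl, h]; rfl)

/-- `C` is an `R`-homology `n`-sphere: there is an augmentation `ε : C₀ → R̲`
such that for every `K ∈ 𝓕` the reduced homology of `C(K)` is that of the
sphere `S^{n(K)}` with coefficients in `R`.  (The homology of the augmented
complex — shifted up by one — is `R` in degree `n(K)+1` and zero elsewhere.) -/
noncomputable def IsHomologySphere (C : OrbitComplex R F) (n : Subgroup G → ℤ) : Prop :=
  ∃ (ε : C.X 0 ⟶ constR R F) (h : C.d 1 0 ≫ ε = 0),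
    (∀ K : OrbitObj F, (∃ i, ¬ IsZeroAt C K i) → Function.Surjective (ε.app (op K))) ∧
    ∀ (K : OrbitObj F) (j : ℕ),
      (if (j : ℤ) = n K.1 + 1
        then Nonempty ((augC C ε h K).homology j ≅ ModuleCat.of R R)
        else Subsingleton ((augC C ε h K).homology j))

/-- The chain map `C(K) → C(H)` induced by a `G`-map `f : G/H → G/K`. -/
noncomputable def evalMap (C : OrbitComplex R F) {H K : OrbitObj F} (f : H ⟶ K) :
    evalC C K ⟶ evalC C H where
  f i := (C.X i).map f.op
  comm' i j _ := (C.d i j).naturality f.op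

/-- Condition (ii) of an algebraic homotopy representation: if `n(H) = n(K)`,
every `G`-map `f : G/H → G/K` induces an `R`-homology isomorphism `C(K) → C(H)`. -/
noncomputable def CondII (C : OrbitComplex R F) (n : Subgroup G → ℤ) : Prop :=
  ∀ (H K : OrbitObj F) (f : H ⟶ K), n H.1 = n K.1 →
    ∀ i : ℕ, IsIso (HomologicalComplex.homologyMap (evalMap C f) i)

/-- Condition (iii) of an algebraic homotopy representation. -/
def CondIII (F : SubgroupFamily G) (n : Subgroup G → ℤ) : Prop :=
  ∀ H K L : Subgroup G, F.mem H → F.mem K → F.mem L → H ≤ K → H ≤ L →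
    n H = n K → n H = n L → -1 < n H → F.mem (K ⊔ L) ∧ n (K ⊔ L) = n H



variable {G : Type} [Group G]

/-- The `G`-map `G/K → G/L`, `gK ↦ gpL`, defined when `p⁻¹ K p ≤ L`. -/
def orbitMk {K L : Subgroup G} (p : G) (h : ∀ k ∈ K, p⁻¹ * k * p ∈ L) :
    (G ⧸ K) →[G] (G ⧸ L) where
  toFun x := Quotient.liftOn' x (fun g => ((g * p : G) : G ⧸ L)) (by
    intro a b hab
    rw [QuotientGroup.leftRel_apply] at hab
    apply Quotient.sound'
    rw [QuotientGroup.leftRel_apply]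
    have : (a * p)⁻¹ * (b * p) = p⁻¹ * (a⁻¹ * b) * p := by group
    rw [this]
    exact h _ hab)
  map_smul' g x := by
    induction x using QuotientGroup.induction_on with
    | H a => show (((g * a) * p : G) : G ⧸ L) = g • ((a * p : G) : G ⧸ L)
             rw [mul_assoc]; rfl

@[simp] lemma orbitMk_apply {K L : Subgroup G} (p : G) (h : ∀ k ∈ K, p⁻¹ * k * p ∈ L) (g : G) :
    orbitMk p h (g : G ⧸ K) = ((g * p : G) : G ⧸ L) := rfl

/-- The distinguished representative of a `G`-map `G/K → G/L`. -/
noncomputable def orbitPt {K L : Subgroup G} (φ : (G ⧸ K) →[G] (G ⧸ L)) : G :=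
  (φ ((1 : G) : G ⧸ K)).out

lemma orbitPt_spec {K L : Subgroup G} (φ : (G ⧸ K) →[G] (G ⧸ L)) :
    ((orbitPt φ : G) : G ⧸ L) = φ ((1 : G) : G ⧸ K) := Quotient.out_eq _

lemma orbit_hom_eq {K L : Subgroup G} (φ : (G ⧸ K) →[G] (G ⧸ L)) (g : G) :
    φ ((g : G) : G ⧸ K) = ((g * orbitPt φ : G) : G ⧸ L) := by
  calc φ ((g : G) : G ⧸ K) = φ (g • ((1 : G) : G ⧸ K)) := by
        rw [show g • ((1 : G) : G ⧸ K) = ((g * 1 : G) : G ⧸ K) from rfl, mul_one]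
    _ = g • φ ((1 : G) : G ⧸ K) := map_smul φ g _
    _ = g • ((orbitPt φ : G) : G ⧸ L) := by rw [orbitPt_spec]
    _ = ((g * orbitPt φ : G) : G ⧸ L) := rfl

lemma orbit_hom_mem {K L : Subgroup G} (φ : (G ⧸ K) →[G] (G ⧸ L)) :
    ∀ k ∈ K, (orbitPt φ)⁻¹ * k * orbitPt φ ∈ L := by
  intro k hk
  have h1 : ((k : G) : G ⧸ K) = ((1 : G) : G ⧸ K) := by
    rw [QuotientGroup.eq]; simpa using K.inv_mem hk
  have h2 : ((k * orbitPt φ : G) : G ⧸ L) = ((1 * orbitPt φ : G) : G ⧸ L) := by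
    rw [← orbit_hom_eq, ← orbit_hom_eq, h1]
  rw [QuotientGroup.eq] at h2
  have : (k * orbitPt φ)⁻¹ * (1 * orbitPt φ) = ((orbitPt φ)⁻¹ * k * orbitPt φ)⁻¹ := by group
  rw [this] at h2
  simpa using L.inv_mem h2

-- extensionality for maps out of quotients
lemma orbit_hom_ext {K L : Subgroup G} (φ ψ : (G ⧸ K) →[G] (G ⧸ L))
    (h : ∀ g : G, φ ((g : G) : G ⧸ K) = ψ ((g : G) : G ⧸ K)) : φ = ψ := by
  ext x
  induction x using QuotientGroup.induction_on with
  | H a => exact h a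

/-- The family `𝓕_P = {K ∈ 𝓕 : K ≤ P}` of subgroups of `P` induced by a family
of subgroups of `G`. -/
def SubFamily (F : SubgroupFamily G) (P : Subgroup G) : SubgroupFamily ↥P where
  mem K := F.mem (K.map P.subtype)
  conj_mem g K hK := by
    show F.mem ((conjSub g K).map P.subtype)
    have h : (conjSub g K).map P.subtype = conjSub (g : G) (K.map P.subtype) := by
      unfold conjSub
      rw [Subgroup.map_map, Subgroup.map_map]
      congr 1
    rw [h]
    exact F.conj_mem _ _ hK
  le_mem H K h hK := F.le_mem _ _ (Subgroup.map_mono h) hK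

/-- The `G`-map `G/K → G/L` induced by a `P`-map `P/K → P/L`, for `K, L ≤ P`. -/
noncomputable def inducedSubMap (P : Subgroup G) {K L : Subgroup ↥P}
    (φ : (↥P ⧸ K) →[↥P] (↥P ⧸ L)) :
    (G ⧸ K.map P.subtype) →[G] (G ⧸ L.map P.subtype) :=
  orbitMk ((orbitPt φ : ↥P) : G) (by
    intro k hk
    obtain ⟨k₀, hk₀, rfl⟩ := Subgroup.mem_map.mp hk
    exact Subgroup.mem_map.mpr ⟨_, orbit_hom_mem φ k₀ hk₀, by simp⟩)

lemma inducedSubMap_id (P : Subgroup G) (K : Subgroup ↥P) :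
    inducedSubMap P (MulActionHom.id ↥P (X := ↥P ⧸ K)) = MulActionHom.id G := by
  apply orbit_hom_ext
  intro g
  have hq : (orbitPt (MulActionHom.id ↥P (X := ↥P ⧸ K))) ∈ K := by
    have h0 := orbitPt_spec (MulActionHom.id ↥P (X := ↥P ⧸ K))
    have h1 : (MulActionHom.id ↥P (X := ↥P ⧸ K)) (((1 : ↥P) : ↥P ⧸ K)) =
        ((1 : ↥P) : ↥P ⧸ K) := rfl
    rw [h1, QuotientGroup.eq] at h0
    simpa using K.inv_mem h0
  show ((g * ((orbitPt (MulActionHom.id ↥P (X := ↥P ⧸ K)) : ↥P) : G) : G) :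
      G ⧸ K.map P.subtype) = ((g : G) : G ⧸ K.map P.subtype)
  rw [QuotientGroup.eq]
  have h2 : (g * ((orbitPt (MulActionHom.id ↥P (X := ↥P ⧸ K)) : ↥P) : G))⁻¹ * g =
      (((orbitPt (MulActionHom.id ↥P (X := ↥P ⧸ K)) : ↥P) : G))⁻¹ := by group
  rw [h2]
  exact (K.map P.subtype).inv_mem (Subgroup.mem_map.mpr ⟨_, hq, rfl⟩)

lemma inducedSubMap_comp (P : Subgroup G) {K L M : Subgroup ↥P}
    (φ : (↥P ⧸ K) →[↥P] (↥P ⧸ L)) (ψ : (↥P ⧸ L) →[↥P] (↥P ⧸ M)) :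
    inducedSubMap P (ψ.comp φ) = (inducedSubMap P ψ).comp (inducedSubMap P φ) := by
  apply orbit_hom_ext
  intro g
  have hr : (orbitPt (ψ.comp φ))⁻¹ * (orbitPt φ * orbitPt ψ) ∈ M := by
    have h1 : ((orbitPt (ψ.comp φ) : ↥P) : ↥P ⧸ M) = ((orbitPt φ * orbitPt ψ : ↥P) : ↥P ⧸ M) := by
      rw [orbitPt_spec]
      show ψ (φ ((1 : ↥P) : ↥P ⧸ K)) = _
      rw [show φ (((1 : ↥P) : ↥P ⧸ K)) = ((orbitPt φ : ↥P) : ↥P ⧸ L) from (orbitPt_spec φ).symm,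
        orbit_hom_eq ψ (orbitPt φ)]
    exact QuotientGroup.eq.mp h1
  show ((g * ((orbitPt (ψ.comp φ) : ↥P) : G) : G) : G ⧸ M.map P.subtype) =
    (inducedSubMap P ψ) ((inducedSubMap P φ) ((g : G) : G ⧸ K.map P.subtype))
  unfold inducedSubMap
  rw [orbitMk_apply, orbitMk_apply, QuotientGroup.eq]
  refine Subgroup.mem_map.mpr ⟨_, hr, ?_⟩
  simp only [Subgroup.coe_subtype]
  push_cast
  group

/-- The functor `Γ_P → Γ_G` sending `P/K` to `G/K`; restriction of modules
along (the opposite of) this functor is the restriction functor `res^G_P`. -/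
noncomputable def subOrbitFunctor (F : SubgroupFamily G) (P : Subgroup G) :
    OrbitObj (SubFamily F P) ⥤ OrbitObj F where
  obj K := ⟨K.1.map P.subtype, K.2⟩
  map {K L} φ := inducedSubMap P φ
  map_id K := inducedSubMap_id P K.1
  map_comp {K L M} φ ψ := inducedSubMap_comp P φ ψ

/-! ### The orbit-category functor `Γ_{G/N} → Γ_G` induced by a quotient `G → G/N` -/

/-- The `G`-map `G/K' → G/L'` (where `K' = comap(K̄)`, `L' = comap(L̄)`) induced by a
`G/N`-map `(G/N)/K̄ → (G/N)/L̄`. -/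
noncomputable def inducedQuotMap (N : Subgroup G) [N.Normal] {Kb Lb : Subgroup (G ⧸ N)}
    (φ : ((G ⧸ N) ⧸ Kb) →[G ⧸ N] ((G ⧸ N) ⧸ Lb)) :
    (G ⧸ Kb.comap (QuotientGroup.mk' N)) →[G] (G ⧸ Lb.comap (QuotientGroup.mk' N)) :=
  orbitMk ((orbitPt φ).out) (by
    intro k hk
    rw [Subgroup.mem_comap]
    have hout : (QuotientGroup.mk' N) (orbitPt φ).out = orbitPt φ := by
      rw [QuotientGroup.mk'_apply]; exact Quotient.out_eq _
    rw [map_mul, map_mul, map_inv, hout]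
    exact orbit_hom_mem φ _ (Subgroup.mem_comap.mp hk))

lemma inducedQuotMap_id (N : Subgroup G) [N.Normal] (Kb : Subgroup (G ⧸ N)) :
    inducedQuotMap N (MulActionHom.id (G ⧸ N) (X := (G ⧸ N) ⧸ Kb)) = MulActionHom.id G := by
  apply orbit_hom_ext
  intro g
  have hout : (QuotientGroup.mk' N) (orbitPt (MulActionHom.id (G ⧸ N) (X := (G ⧸ N) ⧸ Kb))).out
      = orbitPt (MulActionHom.id (G ⧸ N) (X := (G ⧸ N) ⧸ Kb)) := by
    rw [QuotientGroup.mk'_apply]; exact Quotient.out_eq _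
  have hq : (orbitPt (MulActionHom.id (G ⧸ N) (X := (G ⧸ N) ⧸ Kb))).out ∈
      Kb.comap (QuotientGroup.mk' N) := by
    rw [Subgroup.mem_comap, hout]
    have h0 := orbitPt_spec (MulActionHom.id (G ⧸ N) (X := (G ⧸ N) ⧸ Kb))
    have h1 : (MulActionHom.id (G ⧸ N) (X := (G ⧸ N) ⧸ Kb)) ((1 : G ⧸ N) : (G ⧸ N) ⧸ Kb) =
        ((1 : G ⧸ N) : (G ⧸ N) ⧸ Kb) := rfl
    rw [h1, QuotientGroup.eq] at h0
    simpa using Kb.inv_mem h0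
  show ((g * (orbitPt (MulActionHom.id (G ⧸ N) (X := (G ⧸ N) ⧸ Kb))).out : G) :
      G ⧸ Kb.comap (QuotientGroup.mk' N)) = ((g : G) : G ⧸ Kb.comap (QuotientGroup.mk' N))
  rw [QuotientGroup.eq]
  have h2 : (g * (orbitPt (MulActionHom.id (G ⧸ N) (X := (G ⧸ N) ⧸ Kb))).out)⁻¹ * g =
      ((orbitPt (MulActionHom.id (G ⧸ N) (X := (G ⧸ N) ⧸ Kb))).out)⁻¹ := by group
  rw [h2]
  exact (Kb.comap (QuotientGroup.mk' N)).inv_mem hq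

lemma inducedQuotMap_comp (N : Subgroup G) [N.Normal] {Kb Lb Mb : Subgroup (G ⧸ N)}
    (φ : ((G ⧸ N) ⧸ Kb) →[G ⧸ N] ((G ⧸ N) ⧸ Lb))
    (ψ : ((G ⧸ N) ⧸ Lb) →[G ⧸ N] ((G ⧸ N) ⧸ Mb)) :
    inducedQuotMap N (ψ.comp φ) = (inducedQuotMap N ψ).comp (inducedQuotMap N φ) := by
  apply orbit_hom_ext
  intro g
  have hr : (orbitPt (ψ.comp φ))⁻¹ * (orbitPt φ * orbitPt ψ) ∈ Mb := by
    have h1 : ((orbitPt (ψ.comp φ) : G ⧸ N) : (G ⧸ N) ⧸ Mb)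
        = ((orbitPt φ * orbitPt ψ : G ⧸ N) : (G ⧸ N) ⧸ Mb) := by
      rw [orbitPt_spec]
      show ψ (φ ((1 : G ⧸ N) : (G ⧸ N) ⧸ Kb)) = _
      rw [show φ ((1 : G ⧸ N) : (G ⧸ N) ⧸ Kb) = ((orbitPt φ : G ⧸ N) : (G ⧸ N) ⧸ Lb) from
            (orbitPt_spec φ).symm,
        orbit_hom_eq ψ (orbitPt φ)]
    exact QuotientGroup.eq.mp h1
  show ((g * (orbitPt (ψ.comp φ)).out : G) : G ⧸ Mb.comap (QuotientGroup.mk' N)) =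
    (inducedQuotMap N ψ) ((inducedQuotMap N φ) ((g : G) : G ⧸ Kb.comap (QuotientGroup.mk' N)))
  unfold inducedQuotMap
  rw [orbitMk_apply, orbitMk_apply, QuotientGroup.eq]
  rw [Subgroup.mem_comap]
  have hout : ∀ {Ab Bb : Subgroup (G ⧸ N)} (χ : ((G ⧸ N) ⧸ Ab) →[G ⧸ N] ((G ⧸ N) ⧸ Bb)),
      (QuotientGroup.mk' N) (orbitPt χ).out = orbitPt χ := fun χ => by
    rw [QuotientGroup.mk'_apply]; exact Quotient.out_eq _
  have : (QuotientGroup.mk' N) ((g * (orbitPt (ψ.comp φ)).out)⁻¹ * (g * (orbitPt φ).out * (orbitPt ψ).out))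
      = (orbitPt (ψ.comp φ))⁻¹ * (orbitPt φ * orbitPt ψ) := by
    rw [map_mul, map_inv, map_mul, map_mul, map_mul, hout, hout, hout]
    group
  rw [this]
  exact hr

/-- The functor `Γ_{G/N} → Γ_G` regarding an orbit of `G/N` as a `G`-set via the
quotient map `G → G/N`.  Restriction of modules along (the opposite of) this
functor is the deflation functor `Def^G_{G/N}`. -/
noncomputable def quotOrbitFunctor (F : SubgroupFamily G) (N : Subgroup G) [N.Normal]
    (FQ : SubgroupFamily (G ⧸ N))
    (hFQ : ∀ Kb : Subgroup (G ⧸ N), FQ.mem Kb ↔ F.mem (Kb.comap (QuotientGroup.mk' N))) :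
    OrbitObj FQ ⥤ OrbitObj F where
  obj Kb := ⟨Kb.1.comap (QuotientGroup.mk' N), (hFQ _).mp Kb.2⟩
  map {Kb Lb} φ := inducedQuotMap N φ
  map_id Kb := inducedQuotMap_id N Kb.1
  map_comp {Kb Lb Mb} φ ψ := inducedQuotMap_comp N φ ψ

/-- The deflation functor `Def^G_{G/N}`: restriction of modules along
`Γ_{G/N} → Γ_G`. -/
noncomputable def defMod (R : Type) [CommRing R] {G : Type} [Group G] (F : SubgroupFamily G)
    (N : Subgroup G) [N.Normal] (FQ : SubgroupFamily (G ⧸ N))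
    (hFQ : ∀ Kb : Subgroup (G ⧸ N), FQ.mem Kb ↔ F.mem (Kb.comap (QuotientGroup.mk' N))) :
    OrbitMod R F ⥤ OrbitMod R FQ :=
  (Functor.whiskeringLeft _ _ _).obj (quotOrbitFunctor F N FQ hFQ).op

/-! ### The module `R[X]` of a `G`-set `X` -/

/-- The `RΓ_G`-module `R[X]` of a `G`-set `X`, with value the free `R`-module
on `X^K ≅ Map_G(G/K, X)` at `G/K`. -/
noncomputable def gsetMod (R : Type) [CommRing R] {G : Type} [Group G] (F : SubgroupFamily G)
    (X : Type) [MulAction G X] : OrbitMod R F where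
  obj V := ModuleCat.of R (((G ⧸ (V.unop).1) →[G] X) →₀ R)
  map {V W} f := ModuleCat.ofHom
    (Finsupp.lmapDomain R R (fun (u : (G ⧸ (V.unop).1) →[G] X) => u.comp f.unop))
  map_id V := ModuleCat.hom_ext <|
    (congrArg (Finsupp.lmapDomain R R)
      (funext fun (u : (G ⧸ (V.unop).1) →[G] X) => MulActionHom.comp_id u)).trans
      (Finsupp.lmapDomain_id R R)
  map_comp {V W U} f g := by
    have h : (fun (u : (G ⧸ (V.unop).1) →[G] X) => u.comp ((f ≫ g).unop)) =
        ((fun (u : (G ⧸ (W.unop).1) →[G] X) => u.comp g.unop) ∘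
          (fun (u : (G ⧸ (V.unop).1) →[G] X) => u.comp f.unop)) :=
      funext fun u => MulActionHom.comp_assoc u f.unop g.unop
    exact ModuleCat.hom_ext <|
      (congrArg (Finsupp.lmapDomain R R) h).trans (Finsupp.lmapDomain_comp R R _ _)

/-- A `G/N`-set regarded as a `G`-set via the quotient map `G → G/N`. -/
def InflatedSet {G : Type} [Group G] (N : Subgroup G) [N.Normal] (X : Type) : Type := X

instance {G : Type} [Group G] (N : Subgroup G) [N.Normal] (X : Type)
    [MulAction (G ⧸ N) X] : MulAction G (InflatedSet N X) :=
  MulAction.compHom X (QuotientGroup.mk' N)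

/-- The `G/N`-action on the `N`-fixed points of a `G`-set. -/
noncomputable instance fixedPointsQuotientAction {G : Type} [Group G] (N : Subgroup G)
    [hN : N.Normal] (X : Type) [MulAction G X] :
    MulAction (G ⧸ N) (MulAction.fixedPoints ↥N X) where
  smul q x := Quotient.liftOn' q
    (fun g => (⟨g • (x : X), by
      rw [MulAction.mem_fixedPoints]
      intro n
      have h1 : (n : G) • (g • (x : X)) = g • (((g⁻¹ * n * g : G) : G) • (x : X)) := by
        rw [← mul_smul, ← mul_smul]
        congr 1
        group
      have h2 : ((g⁻¹ * (n : G) * g : G)) • (x : X) = (x : X) := by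
        have hmem : g⁻¹ * (n : G) * g ∈ N := by
          have := hN.conj_mem (n : G) n.2 g⁻¹
          simpa [mul_assoc] using this
        exact x.2 ⟨_, hmem⟩
      show (n : G) • (g • (x : X)) = g • (x : X)
      rw [h1, h2]⟩ : MulAction.fixedPoints ↥N X))
    (by
      intro a b hab
      rw [QuotientGroup.leftRel_apply] at hab
      apply Subtype.ext
      show a • (x : X) = b • (x : X)
      have hx : ((a⁻¹ * b : G)) • (x : X) = (x : X) := x.2 ⟨_, hab⟩
      have hb : b = a * (a⁻¹ * b) := by group
      rw [hb, mul_smul, hx])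
  one_smul x := by
    apply Subtype.ext
    show (1 : G) • (x : X) = (x : X)
    exact one_smul G (x : X)
  mul_smul q r x := by
    induction q using QuotientGroup.induction_on with
    | H a =>
      induction r using QuotientGroup.induction_on with
      | H b =>
        apply Subtype.ext
        show (a * b) • (x : X) = a • (b • (x : X))
        exact mul_smul a b (x : X)

/-!
`R[X]` is the free `R`-module functor applied to the presheaf of sets `K ↦ X^K = Map_G(G/K, X)`
on the orbit category. Since taking free modules is left adjoint to forgetting and `Inf` is left
adjoint to `Def`, by Yoneda it suffices to see that `K ↦ Map_G(G/K, Inf X)` is the left Kan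
extension along `Γ_{G/N} → Γ_G` of `K/N ↦ Map_{G/N}((G/N)/(K/N), X)`. This is so because every
`G`-map `ψ : G/K → Inf X` factors as `G/K → G/G_x → Inf X` with `x = ψ(eK)`, and `G_x` contains
`N` and lies in `𝓕`, as `X` has isotropy in `𝓕_{G/N}`; any other factorisation of `ψ` through
an orbit of `G/N` differs from this one by a `G/N`-map.
-/

namespace MulActionHom
variable {Γ : Type} [Group Γ] {K : Subgroup Γ} {Y : Type} [MulAction Γ Y]

theorem apply_mk_eq_smul (φ : Γ ⧸ K →[Γ] Y) (g : Γ) :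
    φ (g : Γ ⧸ K) = g • φ ((1 : Γ) : Γ ⧸ K) := by
  rw [← map_smul, MulAction.Quotient.smul_mk, smul_eq_mul, mul_one]

theorem smul_apply_one_of_mem (φ : Γ ⧸ K →[Γ] Y) {k : Γ} (hk : k ∈ K) :
    k • φ ((1 : Γ) : Γ ⧸ K) = φ ((1 : Γ) : Γ ⧸ K) := by
  rw [← apply_mk_eq_smul, ← one_mul k, QuotientGroup.mk_mul_of_mem 1 hk]

theorem ext_quotient {φ ψ : Γ ⧸ K →[Γ] Y} (h : φ ((1 : Γ) : Γ ⧸ K) = ψ ((1 : Γ) : Γ ⧸ K)) :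
    φ = ψ := by
  ext y
  induction y using QuotientGroup.induction_on with
  | H g => rw [apply_mk_eq_smul, apply_mk_eq_smul ψ, h]

end MulActionHom

section OrbitMap
variable (Γ : Type) [Group Γ] {X : Type} [MulAction Γ X]

def orbitMap (x : X) : Γ ⧸ MulAction.stabilizer Γ x →[Γ] X where
  toFun := MulAction.ofQuotientStabilizer Γ x
  map_smul' := MulAction.ofQuotientStabilizer_smul Γ x

theorem orbitMap_mk (x : X) (g : Γ) :
    orbitMap Γ x (g : Γ ⧸ MulAction.stabilizer Γ x) = g • x := rfl

variable {Γ}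

theorem exists_orbitMap_comp_eq {K : Subgroup Γ} (φ : Γ ⧸ K →[Γ] X) {x : X}
    (hx : x ∈ MulAction.orbit Γ (φ ((1 : Γ) : Γ ⧸ K))) :
    ∃ v : Γ ⧸ K →[Γ] Γ ⧸ MulAction.stabilizer Γ x, (orbitMap Γ x).comp v = φ := by
  obtain ⟨q, rfl⟩ := hx
  have hK : ∀ k ∈ K, q⁻¹⁻¹ * k * q⁻¹ ∈ MulAction.stabilizer Γ (q • φ ((1 : Γ) : Γ ⧸ K)) := by
    intro k hk
    rw [MulAction.mem_stabilizer_iff, inv_inv, mul_smul, mul_smul, inv_smul_smul,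
      φ.smul_apply_one_of_mem hk]
  refine ⟨orbitMk q⁻¹ hK, MulActionHom.ext_quotient ?_⟩
  rw [MulActionHom.comp_apply, orbitMk_apply, orbitMap_mk, one_mul, inv_smul_smul]

end OrbitMap

section InflatedMaps
variable {G : Type} [Group G] (N : Subgroup G) [N.Normal] {X : Type} [MulAction (G ⧸ N) X]

def inflateHom {Kb : Subgroup (G ⧸ N)} (φ : (G ⧸ N) ⧸ Kb →[G ⧸ N] X) :
    G ⧸ Kb.comap (QuotientGroup.mk' N) →[G] InflatedSet N X where
  toFun := Quotient.lift (fun g => φ ((g : G ⧸ N) : (G ⧸ N) ⧸ Kb)) fun a b hab => by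
    congr 1
    exact QuotientGroup.eq.mpr (by simpa using QuotientGroup.leftRel_apply.mp hab)
  map_smul' g y := by
    induction y using QuotientGroup.induction_on with
    | H a => exact map_smul φ (g : G ⧸ N) ((a : G ⧸ N) : (G ⧸ N) ⧸ Kb)

theorem inflateHom_mk {Kb : Subgroup (G ⧸ N)} (φ : (G ⧸ N) ⧸ Kb →[G ⧸ N] X) (g : G) :
    inflateHom N φ (g : G ⧸ Kb.comap (QuotientGroup.mk' N)) = φ ((g : G ⧸ N) : (G ⧸ N) ⧸ Kb) :=
  rfl

theorem inflateHom_comp_inducedQuotMap {Kb Lb : Subgroup (G ⧸ N)}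
    (φ : (G ⧸ N) ⧸ Lb →[G ⧸ N] X) (ψ : (G ⧸ N) ⧸ Kb →[G ⧸ N] (G ⧸ N) ⧸ Lb) :
    (inflateHom N φ).comp (inducedQuotMap N ψ) = inflateHom N (φ.comp ψ) := by
  apply MulActionHom.ext_quotient
  show φ (((1 * (orbitPt ψ).out : G) : G ⧸ N) : (G ⧸ N) ⧸ Lb) = φ (ψ ((1 : G) : (G ⧸ N) ⧸ Kb))
  rw [one_mul, QuotientGroup.out_eq', orbitPt_spec]
  rfl

theorem inflateHom_injective {Kb : Subgroup (G ⧸ N)} {φ : (G ⧸ N) ⧸ Kb →[G ⧸ N] X}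
    (hφ : Function.Injective φ) : Function.Injective (inflateHom N φ) := by
  intro a b hab
  induction a using QuotientGroup.induction_on with | H a =>
  induction b using QuotientGroup.induction_on with | H b =>
  exact QuotientGroup.eq.mpr (by simpa using QuotientGroup.eq.mp (hφ hab))

def basePoint {K : Subgroup G} (ψ : G ⧸ K →[G] InflatedSet N X) : X := ψ ((1 : G) : G ⧸ K)

theorem basePoint_inflateHom_comp_mem_orbit {K : Subgroup G} {Kb : Subgroup (G ⧸ N)}
    (φ : (G ⧸ N) ⧸ Kb →[G ⧸ N] X) (u : G ⧸ K →[G] G ⧸ Kb.comap (QuotientGroup.mk' N)) :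
    basePoint N ((inflateHom N φ).comp u) ∈
      MulAction.orbit (G ⧸ N) (φ ((1 : G ⧸ N) : (G ⧸ N) ⧸ Kb)) := by
  refine ⟨((orbitPt u : G) : G ⧸ N), ?_⟩
  show ((orbitPt u : G) : G ⧸ N) • φ ((1 : G ⧸ N) : (G ⧸ N) ⧸ Kb) =
    inflateHom N φ (u ((1 : G) : G ⧸ K))
  rw [orbit_hom_eq, one_mul, inflateHom_mk, φ.apply_mk_eq_smul ((orbitPt u : G) : G ⧸ N)]

def toStabilizerOrbit {K : Subgroup G} (ψ : G ⧸ K →[G] InflatedSet N X) :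
    G ⧸ K →[G] G ⧸ (MulAction.stabilizer (G ⧸ N) (basePoint N ψ)).comap (QuotientGroup.mk' N) :=
  orbitMk 1 fun k hk => by
    rw [inv_one, one_mul, mul_one, Subgroup.mem_comap, MulAction.mem_stabilizer_iff]
    exact ψ.smul_apply_one_of_mem hk

theorem inflateHom_orbitMap_comp_toStabilizerOrbit {K : Subgroup G}
    (ψ : G ⧸ K →[G] InflatedSet N X) :
    (inflateHom N (orbitMap (G ⧸ N) (basePoint N ψ))).comp (toStabilizerOrbit N ψ) = ψ := by
  apply MulActionHom.ext_quotient
  rw [MulActionHom.comp_apply, toStabilizerOrbit, orbitMk_apply, mul_one, inflateHom_mk,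
    orbitMap_mk, QuotientGroup.mk_one, one_smul]
  rfl

theorem eq_toStabilizerOrbit {K : Subgroup G} {ψ : G ⧸ K →[G] InflatedSet N X}
    (w : G ⧸ K →[G] G ⧸ (MulAction.stabilizer (G ⧸ N) (basePoint N ψ)).comap (QuotientGroup.mk' N))
    (hw : (inflateHom N (orbitMap (G ⧸ N) (basePoint N ψ))).comp w = ψ) :
    w = toStabilizerOrbit N ψ := by
  have h := hw.trans (inflateHom_orbitMap_comp_toStabilizerOrbit N ψ).symm
  ext y
  exact inflateHom_injective N (MulAction.injective_ofQuotientStabilizer _ _)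
    (congrArg (fun f => f y) h)

end InflatedMaps

def orbitPresheaf {G : Type} [Group G] (F : SubgroupFamily G) (Y : Type) [MulAction G Y] :
    (OrbitObj F)ᵒᵖ ⥤ Type where
  obj K := G ⧸ K.unop.1 →[G] Y
  map f := TypeCat.ofHom fun u => u.comp f.unop

section InflationKanExtension
variable {G : Type} [Group G] (N : Subgroup G) [N.Normal] {X : Type} [MulAction (G ⧸ N) X]
  {F : SubgroupFamily G} {FQ : SubgroupFamily (G ⧸ N)}
  (hFQ : ∀ Kb : Subgroup (G ⧸ N), FQ.mem Kb ↔ F.mem (Kb.comap (QuotientGroup.mk' N)))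

variable (X) in
noncomputable def inflationUnit :
    orbitPresheaf FQ X ⟶ (quotOrbitFunctor F N FQ hFQ).op ⋙ orbitPresheaf F (InflatedSet N X) where
  app Kb := TypeCat.ofHom (inflateHom N)
  naturality Kb Lb f := by
    ext φ
    exact (inflateHom_comp_inducedQuotMap N φ f.unop).symm

variable (hiso : ∀ x : X, FQ.mem (MulAction.stabilizer (G ⧸ N) x))

def stabilizerObj (x : X) : OrbitObj FQ := ⟨MulAction.stabilizer (G ⧸ N) x, hiso x⟩

noncomputable def toStabilizerHom {K : OrbitObj F} (ψ : G ⧸ K.1 →[G] InflatedSet N X) :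
    K ⟶ (quotOrbitFunctor F N FQ hFQ).obj (stabilizerObj N hiso (basePoint N ψ)) :=
  toStabilizerOrbit N ψ

variable {T : (OrbitObj F)ᵒᵖ ⥤ Type}
  (σ : orbitPresheaf FQ X ⟶ (quotOrbitFunctor F N FQ hFQ).op ⋙ T)

noncomputable def inflationDescValue {K : OrbitObj F} (ψ : G ⧸ K.1 →[G] InflatedSet N X) :
    T.obj (op K) :=
  T.map (toStabilizerHom N hFQ hiso ψ).op
    (σ.app (op (stabilizerObj N hiso (basePoint N ψ))) (orbitMap (G ⧸ N) (basePoint N ψ)))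

theorem map_app_eq_inflationDescValue {K : OrbitObj F} {Kb : OrbitObj FQ}
    (φ : (G ⧸ N) ⧸ Kb.1 →[G ⧸ N] X) (u : K ⟶ (quotOrbitFunctor F N FQ hFQ).obj Kb) :
    T.map u.op (σ.app (op Kb) φ) = inflationDescValue N hFQ hiso σ ((inflateHom N φ).comp u) := by
  let u' : G ⧸ K.1 →[G] G ⧸ Kb.1.comap (QuotientGroup.mk' N) := u
  set x := basePoint N ((inflateHom N φ).comp u')
  obtain ⟨v, hv⟩ := exists_orbitMap_comp_eq φ (basePoint_inflateHom_comp_mem_orbit N φ u')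
  let v' : Kb ⟶ stabilizerObj N hiso x := v
  have hu : u ≫ (quotOrbitFunctor F N FQ hFQ).map v' = toStabilizerHom N hFQ hiso _ :=
    eq_toStabilizerOrbit N ((inducedQuotMap N v).comp u') (by
      rw [MulActionHom.comp_assoc, inflateHom_comp_inducedQuotMap, hv])
  calc T.map u.op (σ.app (op Kb) φ)
      = T.map u.op (σ.app (op Kb) ((orbitPresheaf FQ X).map v'.op (orbitMap _ x))) := by
        rw [← hv]; rfl
    _ = T.map (u ≫ (quotOrbitFunctor F N FQ hFQ).map v').op (σ.app _ (orbitMap _ x)) := by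
        rw [NatTrans.naturality_apply σ v'.op (orbitMap _ x), op_comp]
        exact (T.map_comp_apply _ _ _).symm
    _ = _ := by rw [hu]; rfl

theorem inflationDescValue_comp {K L : OrbitObj F} (ψ : G ⧸ K.1 →[G] InflatedSet N X)
    (f : L ⟶ K) :
    inflationDescValue N hFQ hiso σ (ψ.comp f) =
      T.map f.op (inflationDescValue N hFQ hiso σ ψ) := by
  let g : L ⟶ _ := f ≫ toStabilizerHom N hFQ hiso ψ
  have hψ : ψ.comp f = (inflateHom N (orbitMap _ (basePoint N ψ))).comp g := by
    conv_lhs => rw [← inflateHom_orbitMap_comp_toStabilizerOrbit N ψ]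
    rfl
  calc inflationDescValue N hFQ hiso σ (ψ.comp f)
      = inflationDescValue N hFQ hiso σ ((inflateHom N (orbitMap _ (basePoint N ψ))).comp g) := by
        rw [hψ]
    _ = T.map g.op (σ.app _ (orbitMap _ (basePoint N ψ))) :=
        (map_app_eq_inflationDescValue N hFQ hiso σ _ g).symm
    _ = T.map f.op (inflationDescValue N hFQ hiso σ ψ) :=
        T.map_comp_apply (toStabilizerHom N hFQ hiso ψ).op f.op _

noncomputable def inflationDesc : orbitPresheaf F (InflatedSet N X) ⟶ T where
  app K := TypeCat.ofHom (inflationDescValue N hFQ hiso σ)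
  naturality K L f := by
    ext ψ
    exact inflationDescValue_comp N hFQ hiso σ ψ f.unop

theorem inflationUnit_comp_inflationDesc :
    inflationUnit N X hFQ ≫ Functor.whiskerLeft _ (inflationDesc N hFQ hiso σ) = σ := by
  ext Kb φ
  have h := map_app_eq_inflationDescValue N hFQ hiso σ φ (𝟙 _)
  rw [op_id, Functor.map_id_apply] at h
  exact h.symm

theorem app_eq_map_inflationUnit_comp (β : orbitPresheaf F (InflatedSet N X) ⟶ T)
    {K : (OrbitObj F)ᵒᵖ} (ψ : G ⧸ K.unop.1 →[G] InflatedSet N X) :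
    β.app K ψ = T.map (toStabilizerHom N hFQ hiso ψ).op
      ((inflationUnit N X hFQ ≫ Functor.whiskerLeft _ β).app _ (orbitMap _ (basePoint N ψ))) := by
  conv_lhs => rw [← inflateHom_orbitMap_comp_toStabilizerOrbit N ψ]
  exact NatTrans.naturality_apply β (toStabilizerHom N hFQ hiso ψ).op _

include hiso in
theorem inflation_hom_ext {β β' : orbitPresheaf F (InflatedSet N X) ⟶ T}
    (h : inflationUnit N X hFQ ≫ Functor.whiskerLeft _ β =
      inflationUnit N X hFQ ≫ Functor.whiskerLeft _ β') : β = β' := by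
  ext K ψ
  change β.app K ψ = β'.app K ψ
  rw [app_eq_map_inflationUnit_comp N hFQ hiso β ψ, app_eq_map_inflationUnit_comp N hFQ hiso β' ψ,
    h]

include hiso in
theorem isLeftKanExtension_inflationUnit :
    (orbitPresheaf F (InflatedSet N X)).IsLeftKanExtension (inflationUnit N X hFQ) :=
  ⟨⟨IsInitial.ofUniqueHom
    (fun E => StructuredArrow.homMk (inflationDesc N hFQ hiso E.hom)
      (inflationUnit_comp_inflationDesc N hFQ hiso E.hom))
    (fun E m => StructuredArrow.hom_ext _ _ (inflation_hom_ext N hFQ hiso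
      ((StructuredArrow.w m).trans (inflationUnit_comp_inflationDesc N hFQ hiso E.hom).symm)))⟩⟩

end InflationKanExtension

noncomputable def leftAdjointObjFreeIso {C D : Type} [SmallCategory C] [SmallCategory D]
    {R : Type} [CommRing R] {Φ : C ⥤ D} {Inf : (C ⥤ ModuleCat.{0} R) ⥤ (D ⥤ ModuleCat.{0} R)}
    (adj : Inf ⊣ (Functor.whiskeringLeft C D _).obj Φ) {P : C ⥤ Type} {P' : D ⥤ Type}
    (α : P ⟶ Φ ⋙ P') [P'.IsLeftKanExtension α] :
    Inf.obj (P ⋙ ModuleCat.free R) ≅ P' ⋙ ModuleCat.free R :=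
  let freeC := (ModuleCat.adj R).whiskerRight C
  let freeD := (ModuleCat.adj R).whiskerRight D
  let forget : (D ⥤ ModuleCat R) ⥤ (D ⥤ Type) :=
    (Functor.whiskeringRight _ _ _).obj (CategoryTheory.forget (ModuleCat R))
  let kan : coyoneda.obj (op P') ≅ (Functor.whiskeringLeft _ _ _).obj Φ ⋙ coyoneda.obj (op P) :=
    NatIso.ofComponents fun T => (P'.homEquivOfIsLeftKanExtension α T).toIso
  (Coyoneda.fullyFaithful.preimageIso
    (adj.compCoyonedaIso.app (op _) ≪≫
      Functor.isoWhiskerLeft _ (freeC.compCoyonedaIso.app (op P)) ≪≫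
      -- restricting along `Φ` and forgetting the module structure commute on the nose
      Iso.refl (forget ⋙ (Functor.whiskeringLeft _ _ _).obj Φ ⋙ coyoneda.obj (op P)) ≪≫
      Functor.isoWhiskerLeft forget kan.symm ≪≫
      (freeD.compCoyonedaIso.app (op P')).symm)).unop.symm

theorem statement5_general (G R : Type) [Group G] [CommRing R]
    (F : SubgroupFamily G) (N : Subgroup G) [N.Normal]
    (FQ : SubgroupFamily (G ⧸ N))
    (hFQ : ∀ Kb : Subgroup (G ⧸ N), FQ.mem Kb ↔ F.mem (Kb.comap (QuotientGroup.mk' N)))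
    (X : Type) [MulAction (G ⧸ N) X]
    (hiso : ∀ x : X, FQ.mem (MulAction.stabilizer (G ⧸ N) x))
    (Inf : OrbitMod R FQ ⥤ OrbitMod R F)
    (adj : Inf ⊣ defMod R F N FQ hFQ) :
    Nonempty (Inf.obj (gsetMod R FQ X) ≅ gsetMod R F (InflatedSet N X)) :=
  -- `gsetMod R F Y` is `orbitPresheaf F Y ⋙ ModuleCat.free R` by definition, and `defMod` is
  -- restriction along `quotOrbitFunctor`
  have := isLeftKanExtension_inflationUnit N hFQ hiso
  ⟨leftAdjointObjFreeIso adj (inflationUnit N X hFQ)⟩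

/-- [HPY 2014, Lemma on inflation].  Let `N ⊴ G` with `N ∈ 𝓕`,
and let `X` be a finite `G/N`-set with isotropy in `𝓕_{G/N}`.  Then the
inflation `Inf^G_{G/N}` (the left adjoint of the deflation/restriction functor
`Def^G_{G/N}`) satisfies `Inf^G_{G/N} R[X] ≅ R[Inf^G_{G/N} X]`. -/
theorem statement5 (G R : Type) [Group G] [Finite G] [CommRing R]
    (F : SubgroupFamily G) (N : Subgroup G) [N.Normal] (hNF : F.mem N)
    (FQ : SubgroupFamily (G ⧸ N))
    (hFQ : ∀ Kb : Subgroup (G ⧸ N), FQ.mem Kb ↔ F.mem (Kb.comap (QuotientGroup.mk' N)))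
    (X : Type) [Finite X] [MulAction (G ⧸ N) X]
    (hiso : ∀ x : X, FQ.mem (MulAction.stabilizer (G ⧸ N) x))
    (Inf : OrbitMod R FQ ⥤ OrbitMod R F)
    (adj : Inf ⊣ defMod R F N FQ hFQ) :
    Nonempty (Inf.obj (gsetMod R FQ X) ≅ gsetMod R F (InflatedSet N X)) :=
  statement5_general G R F N FQ hFQ X hiso Inf adj
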